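/- arXiv:2408.08556 — 3 statements merged into one kernel-verified Lean document; each statement's English description precedes it below -/
import Mathlib

section
/- Fix an integer N ≥ 2, a vector v ∈ ℂ^N, and an integer 1 ≤ m ≤ N. For a subset C ⊆ {1,…,N} with |C| = m, let v_C ∈ ℂ^N be the restriction of v to C (i.e. (v_C)_i = v_i if i ∈ C and 0 otherwise). Then the average over all size-m subsets C of the rank-one matrix v_C v_C† equals (m(N−m)/(N(N−1))) · D + (m(m−1)/(N(N−1))) · v v†, where D is the diagonal matrix with D_{ii} = |v_i|² and v v† is the outer product of v with its conjugate transpose. -/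
/-!
The `(i, j)` entry of `v_C v_C†` is `v i * conj (v j)` if `{i, j} ⊆ C` and `0` otherwise, so the
average is `v i * conj (v j)` times the fraction of the `m`-subsets containing `{i, j}`. Double
counting (`Nat.choose_mul`) shows that the `m`-subsets of an `N`-set containing a fixed `k`-set
make up the fraction `C(m, k) / C(N, k)`: that is `m / N` on the diagonal and
`m (m - 1) / (N (N - 1))` off it, and `m (N - m) + m (m - 1) = m (N - 1)`.
-/

open Finset

lemma Finset.card_filter_powersetCard_subset_mul_choose {α : Type*} [DecidableEq α]
    (s t : Finset α) (n : ℕ) (hst : s ⊆ t) :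
    #((t.powersetCard n).filter (s ⊆ ·)) * (#t).choose #s = (#t).choose n * n.choose #s := by
  by_cases hsn : #s ≤ n
  · rw [card_filter_powersetCard_subset s t n hst hsn, Nat.choose_mul hsn, mul_comm]
  · have hempty : (t.powersetCard n).filter (s ⊆ ·) = ∅ :=
      filter_eq_empty_iff.mpr fun C hC hsC ↦ hsn <| (mem_powersetCard.mp hC).2 ▸ card_le_card hsC
    rw [hempty, Nat.choose_eq_zero_of_lt (not_le.mp hsn), card_empty, zero_mul, mul_zero]

lemma Finset.cast_card_filter_powersetCard_univ_subset_div_choose {ι K : Type*} [Fintype ι]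
    [DecidableEq ι] [Field K] [CharZero K] (t : Finset ι) {n : ℕ} (hn : n ≤ Fintype.card ι) :
    (#((univ.powersetCard n).filter (t ⊆ ·)) : K) / (Fintype.card ι).choose n
      = n.choose #t / (Fintype.card ι).choose #t := by
  have hcount := card_filter_powersetCard_subset_mul_choose t univ n (subset_univ t)
  rw [card_univ] at hcount
  have hn₀ : ((Fintype.card ι).choose n : K) ≠ 0 := Nat.cast_ne_zero.mpr (Nat.choose_pos hn).ne'
  have ht₀ : ((Fintype.card ι).choose #t : K) ≠ 0 :=
    Nat.cast_ne_zero.mpr (Nat.choose_pos (card_le_univ t)).ne'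
  rw [div_eq_div_iff hn₀ ht₀]
  exact_mod_cast hcount.trans (mul_comm _ _)

lemma Finset.sum_ite_mem_mul_ite_mem {ι R : Type*} [DecidableEq ι] [NonUnitalNonAssocSemiring R]
    (S : Finset (Finset ι)) (i j : ι) (x y : R) :
    ∑ C ∈ S, (if i ∈ C then x else 0) * (if j ∈ C then y else 0)
      = #(S.filter ({i, j} ⊆ ·)) • (x * y) := by
  have hterm (C : Finset ι) : (if i ∈ C then x else 0) * (if j ∈ C then y else 0)
      = if {i, j} ⊆ C then x * y else 0 := by
    by_cases hi : i ∈ C <;> by_cases hj : j ∈ C <;> simp [insert_subset_iff, hi, hj]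
  simp only [hterm, ← sum_filter, sum_const]

theorem stmt_3_general (N : ℕ) (hN : 2 ≤ N) (v : Fin N → ℂ) (m : ℕ) (hmN : m ≤ N) :
    (1 / (N.choose m : ℂ)) •
      ∑ C ∈ Finset.powersetCard m (Finset.univ : Finset (Fin N)),
        Matrix.of (fun i j : Fin N =>
          (if i ∈ C then v i else 0) * star (if j ∈ C then v j else 0))
      = (((m : ℂ) * ((N : ℂ) - (m : ℂ))) / ((N : ℂ) * ((N : ℂ) - 1))) •
          Matrix.diagonal (fun i : Fin N => v i * star (v i))
        + (((m : ℂ) * ((m : ℂ) - 1)) / ((N : ℂ) * ((N : ℂ) - 1))) •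
          Matrix.of (fun i j : Fin N => v i * star (v j)) := by
  ext i j
  simp only [Matrix.smul_apply, Matrix.sum_apply, Matrix.of_apply, Matrix.add_apply, smul_eq_mul,
    apply_ite star, star_zero, sum_ite_mem_mul_ite_mem, nsmul_eq_mul, ← mul_assoc, one_div,
    inv_mul_eq_div]
  have hfrac (t : Finset (Fin N)) := cast_card_filter_powersetCard_univ_subset_div_choose (K := ℂ)
    t (hmN.trans_eq (Fintype.card_fin N).symm)
  simp only [Fintype.card_fin] at hfrac
  have hN₀ : (N : ℂ) ≠ 0 := Nat.cast_ne_zero.mpr (by omega)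
  have hN₁ : (N : ℂ) - 1 ≠ 0 := by
    rw [sub_ne_zero]; exact_mod_cast (by omega : N ≠ 1)
  rcases eq_or_ne i j with rfl | hij
  · rw [pair_eq_singleton, hfrac, card_singleton, Nat.choose_one_right, Nat.choose_one_right,
      Matrix.diagonal_apply_eq]
    field_simp
    ring
  · rw [hfrac, card_pair hij, Nat.cast_choose_two, Nat.cast_choose_two,
      Matrix.diagonal_apply_ne _ hij]
    field_simp
    ring

/-- Exact second moment of the column-subsampled vector: averaging the outer
product `v_C v_C†` over all size-`m` subsets `C` of `{1,…,N}` yields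
`(m(N−m)/(N(N−1))) · D + (m(m−1)/(N(N−1))) · v v†` where `D = diag(|v_i|²)`. -/
theorem stmt_3 (N : ℕ) (hN : 2 ≤ N) (v : Fin N → ℂ) (m : ℕ) (hm1 : 1 ≤ m) (hmN : m ≤ N) :
    (1 / (N.choose m : ℂ)) •
      ∑ C ∈ Finset.powersetCard m (Finset.univ : Finset (Fin N)),
        Matrix.of (fun i j : Fin N =>
          (if i ∈ C then v i else 0) * star (if j ∈ C then v j else 0))
      = (((m : ℂ) * ((N : ℂ) - (m : ℂ))) / ((N : ℂ) * ((N : ℂ) - 1))) •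
          Matrix.diagonal (fun i : Fin N => v i * star (v i))
        + (((m : ℂ) * ((m : ℂ) - 1)) / ((N : ℂ) * ((N : ℂ) - 1))) •
          Matrix.of (fun i j : Fin N => v i * star (v j)) :=
  stmt_3_general N hN v m hmN
end

section
/- Fix an integer N ≥ 1, a matrix H ∈ ℂ^{N×N}, a vector x ∈ ℂ^N, and integers 1 ≤ m_r ≤ N, 1 ≤ m_c ≤ N. For subsets R, C ⊆ {1,…,N} with |R| = m_r, |C| = m_c, define g(R,C) ∈ ℂ^N by g(R,C)_c = Σ_{r∈R} H_{c,r} x_r for c ∈ C and 0 otherwise, and define ḡ(C) ∈ ℂ^N by ḡ(C)_c = (Hx)_c for c ∈ C and 0 otherwise. Then the average over all such pairs (R,C), sampled uniformly and independently, of ‖g(R,C) − ḡ(C)‖² is at most ((N − m_r)/N) · ‖H‖² · ‖x‖², where ‖H‖ is the operator norm of H and ‖·‖ on vectors is the Euclidean norm. -/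
/-!
Restricted to the rows in `C`, the subsampling error `g(R,C) - ḡ(C)` is `-H x_{Rᶜ}`, where
`x_{Rᶜ}` is `x` with the entries indexed by `R` set to zero. Hence its squared norm is at most
`‖H‖² ∑_{r ∉ R} |x_r|²`. Averaging over `R`, each index `r` avoids `R` in a fraction
`C(N-1, m_r) / C(N, m_r) = (N - m_r) / N` of the `m_r`-subsets, which gives the bound.
-/

noncomputable def toE {N : ℕ} (v : Fin N → ℂ) : EuclideanSpace ℂ (Fin N) := WithLp.toLp 2 v

noncomputable def opNorm {N : ℕ} (A : Matrix (Fin N) (Fin N) ℂ) : ℝ :=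
  ‖(Matrix.toEuclideanCLM (𝕜 := ℂ) A : EuclideanSpace ℂ (Fin N) →L[ℂ] EuclideanSpace ℂ (Fin N))‖

open Finset Matrix

lemma norm_toE_sq {N : ℕ} (v : Fin N → ℂ) : ‖toE v‖ ^ 2 = ∑ i, ‖v i‖ ^ 2 :=
  EuclideanSpace.norm_sq_eq (toE v)

lemma norm_toE_mulVec_le {N : ℕ} (A : Matrix (Fin N) (Fin N) ℂ) (v : Fin N → ℂ) :
    ‖toE (A *ᵥ v)‖ ≤ opNorm A * ‖toE v‖ :=
  (Matrix.toEuclideanCLM (𝕜 := ℂ) A).le_opNorm (toE v)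

lemma norm_toE_ite_sq_le {N : ℕ} (C : Finset (Fin N)) (v : Fin N → ℂ) :
    ‖toE fun c => if c ∈ C then v c else 0‖ ^ 2 ≤ ‖toE v‖ ^ 2 := by
  rw [norm_toE_sq, norm_toE_sq]
  gcongr with c
  split_ifs <;> simp

lemma sum_mul_sub_mulVec {N : ℕ} (H : Matrix (Fin N) (Fin N) ℂ) (x : Fin N → ℂ)
    (R : Finset (Fin N)) (c : Fin N) :
    ∑ r ∈ R, H c r * x r - (H *ᵥ x) c = -(H *ᵥ fun r => if r ∈ R then 0 else x r) c := by
  simp [mulVec, dotProduct, sum_ite, filter_not]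

lemma sum_powersetCard_sum_compl {ι : Type*} [Fintype ι] [DecidableEq ι] (k : ℕ) (f : ι → ℝ) :
    ∑ R ∈ powersetCard k univ, ∑ r ∈ Rᶜ, f r
      = (Fintype.card ι - 1).choose k * ∑ r, f r := by
  have hcount (r : ι) :
      #{R ∈ powersetCard k (univ : Finset ι) | r ∉ R} = (Fintype.card ι - 1).choose k := by
    have : {R ∈ powersetCard k (univ : Finset ι) | r ∉ R} = powersetCard k (univ.erase r) := by
      ext R
      simp [subset_erase, and_comm]
    rw [this, card_powersetCard, card_erase_of_mem (mem_univ r), card_univ]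
  rw [sum_comm' (t' := univ) (s' := fun r => {R ∈ powersetCard k univ | r ∉ R})
    (by intro R r; simp [and_comm])]
  simp [mul_sum, hcount]

lemma choose_pred_div_choose {n k : ℕ} (hn : 1 ≤ n) (hk : k ≤ n) :
    ((n - 1).choose k : ℝ) / n.choose k = (n - k) / n := by
  have h := Nat.choose_mul_succ_eq (n - 1) k
  rw [Nat.sub_add_cancel hn] at h
  have hpos : (0 : ℝ) < n.choose k := by exact_mod_cast Nat.choose_pos hk
  rw [div_eq_div_iff hpos.ne' (by positivity), ← Nat.cast_sub hk, mul_comm _ (n.choose k : ℝ)]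
  exact_mod_cast h

lemma norm_sq_subsample_sub_le {N : ℕ} (H : Matrix (Fin N) (Fin N) ℂ) (x : Fin N → ℂ)
    (R C : Finset (Fin N)) :
    ‖toE (fun c => if c ∈ C then ∑ r ∈ R, H c r * x r else 0) -
        toE (fun c => if c ∈ C then (H *ᵥ x) c else 0)‖ ^ 2
      ≤ opNorm H ^ 2 * ∑ r ∈ Rᶜ, ‖x r‖ ^ 2 := by
  set xRc : Fin N → ℂ := fun r => if r ∈ R then 0 else x r
  have herr : toE (fun c => if c ∈ C then ∑ r ∈ R, H c r * x r else 0) -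
      toE (fun c => if c ∈ C then (H *ᵥ x) c else 0)
        = toE fun c => if c ∈ C then (-(H *ᵥ xRc)) c else 0 := by
    ext c
    by_cases hc : c ∈ C <;> simp [toE, hc, xRc, sum_mul_sub_mulVec]
  have hxRc : ‖toE xRc‖ ^ 2 = ∑ r ∈ Rᶜ, ‖x r‖ ^ 2 := by
    rw [norm_toE_sq, ← sum_compl_add_sum R]
    refine (add_eq_left.2 (sum_eq_zero fun r hr => by simp [xRc, hr])).trans
      (sum_congr rfl fun r hr => ?_)
    simp only [xRc, if_neg (mem_compl.1 hr)]
  calc _ = ‖toE fun c => if c ∈ C then (-(H *ᵥ xRc)) c else 0‖ ^ 2 := by rw [herr]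
    _ ≤ ‖toE (-(H *ᵥ xRc))‖ ^ 2 := norm_toE_ite_sq_le C _
    _ = ‖toE (H *ᵥ xRc)‖ ^ 2 := by rw [← norm_neg (toE (H *ᵥ xRc))]; rfl
    _ ≤ (opNorm H * ‖toE xRc‖) ^ 2 := by gcongr; exact norm_toE_mulVec_le H xRc
    _ = opNorm H ^ 2 * ∑ r ∈ Rᶜ, ‖x r‖ ^ 2 := by rw [mul_pow, hxRc]

theorem stmt_4_general (N : ℕ) (hN : 1 ≤ N) (H : Matrix (Fin N) (Fin N) ℂ) (x : Fin N → ℂ)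
    (mr mc : ℕ) (hmrN : mr ≤ N) (hmcN : mc ≤ N) :
    (1 / ((N.choose mr : ℝ) * (N.choose mc))) *
      ∑ R ∈ Finset.powersetCard mr (Finset.univ : Finset (Fin N)),
        ∑ C ∈ Finset.powersetCard mc (Finset.univ : Finset (Fin N)),
          ‖toE (fun c : Fin N => if c ∈ C then ∑ r ∈ R, H c r * x r else 0) -
            toE (fun c : Fin N => if c ∈ C then H.mulVec x c else 0)‖ ^ 2
      ≤ (((N : ℝ) - (mr : ℝ)) / (N : ℝ)) * opNorm H ^ 2 * ‖toE x‖ ^ 2 := by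
  have hcC : (N.choose mc : ℝ) ≠ 0 := by exact_mod_cast (Nat.choose_pos hmcN).ne'
  calc _ ≤ (1 / ((N.choose mr : ℝ) * (N.choose mc))) *
        ∑ R ∈ powersetCard mr (univ : Finset (Fin N)),
          ∑ _C ∈ powersetCard mc (univ : Finset (Fin N)), opNorm H ^ 2 * ∑ r ∈ Rᶜ, ‖x r‖ ^ 2 := by
        gcongr with R _ C _
        exact norm_sq_subsample_sub_le H x R C
    _ = ((N - 1).choose mr / N.choose mr : ℝ) * opNorm H ^ 2 * ∑ r, ‖x r‖ ^ 2 := by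
        simp only [sum_const, card_powersetCard, card_univ, Fintype.card_fin, nsmul_eq_mul,
          ← mul_sum, sum_powersetCard_sum_compl]
        field_simp
    _ = _ := by rw [choose_pred_div_choose hN hmrN, norm_toE_sq]

/-- Variance bound from row subsampling: the average over uniformly and
independently sampled index sets `R` (`|R| = m_r`) and `C` (`|C| = m_c`) of
`‖g(R,C) − ḡ(C)‖²` is at most `((N − m_r)/N)·‖H‖²·‖x‖²`. -/
theorem stmt_4 (N : ℕ) (hN : 1 ≤ N) (H : Matrix (Fin N) (Fin N) ℂ) (x : Fin N → ℂ)
    (mr mc : ℕ) (hmr1 : 1 ≤ mr) (hmrN : mr ≤ N) (hmc1 : 1 ≤ mc) (hmcN : mc ≤ N) :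
    (1 / ((N.choose mr : ℝ) * (N.choose mc))) *
      ∑ R ∈ Finset.powersetCard mr (Finset.univ : Finset (Fin N)),
        ∑ C ∈ Finset.powersetCard mc (Finset.univ : Finset (Fin N)),
          ‖toE (fun c : Fin N => if c ∈ C then ∑ r ∈ R, H c r * x r else 0) -
            toE (fun c : Fin N => if c ∈ C then H.mulVec x c else 0)‖ ^ 2
      ≤ (((N : ℝ) - (mr : ℝ)) / (N : ℝ)) * opNorm H ^ 2 * ‖toE x‖ ^ 2 :=
  stmt_4_general N hN H x mr mc hmrN hmcN
end

section
/- Let K ≥ 1 be an integer, and let f : ℝ → ℝ be a differentiable function with |f(y)| ≤ M₀ and |f′(y)| ≤ M₁ for all y ∈ ℝ, for constants M₀, M₁ ≥ 0. Define the Fejér kernel S_K(y) = sin²(K·y/2)/(K·sin²(y/2)) for y with sin(y/2) ≠ 0, and the convolution (f ∗ S_K)(x) = (1/(2π)) ∫_{−π}^{π} S_K(y)·f(x − y) dy. Then for every δ ∈ (0, π] and every x ∈ ℝ: |(f ∗ S_K)(x) − f(x)| ≤ δ·M₁ + 2·M₀/(K·sin²(δ/2)). -/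
/-!
Off the zeros of `sin (y / 2)` the Fejér kernel equals the trigonometric polynomial
`∑_{|m|<K} (1 - |m|/K) e^{imy}`, whose mean over `[-π, π]` is `1`; the kernel is also
nonnegative. Hence the error is the kernel average of the increment `f (x - y) - f x`.
For `|y| ≤ δ` the mean value theorem bounds the increment by `δ M₁`, and for `δ < |y| ≤ π`
the kernel itself is at most `1 / (K sin² (δ / 2))` while the increment is at most `2 M₀`.
-/

open Real MeasureTheory intervalIntegral Finset Set
open scoped Interval

theorem sin_sq_sub_sin_sq (a b : ℝ) : sin a ^ 2 - sin b ^ 2 = sin (a + b) * sin (a - b) := by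
  rw [sin_add, sin_sub]
  nlinarith [sin_sq_add_cos_sq a, sin_sq_add_cos_sq b]

theorem sin_half_mul_dirichlet (n : ℕ) (y : ℝ) :
    sin (y / 2) * (2 * ∑ m ∈ range (n + 1), cos (m * y) - 1) = sin ((2 * n + 1) * y / 2) := by
  induction n with
  | zero => norm_num
  | succ n ih =>
    have hstep : sin ((2 * (n + 1 : ℕ) + 1) * y / 2) - sin ((2 * n + 1) * y / 2)
        = 2 * sin (y / 2) * cos ((n + 1 : ℕ) * y) := by
      rw [sin_sub_sin]; push_cast; ring_nf
    rw [sum_range_succ]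
    push_cast at hstep ⊢
    linear_combination ih - hstep

theorem sin_sq_nat_mul_half (K : ℕ) (y : ℝ) :
    sin (K * y / 2) ^ 2 =
      sin (y / 2) ^ 2 * (2 * ∑ m ∈ range K, ((K : ℝ) - m) * cos (m * y) - K) := by
  induction K with
  | zero => simp
  | succ n ih =>
    have hsplit : ∑ m ∈ range (n + 1), ((n + 1 : ℕ) - (m : ℝ)) * cos (m * y)
        = ∑ m ∈ range n, ((n : ℝ) - m) * cos (m * y)
          + ∑ m ∈ range (n + 1), cos (m * y) := by
      rw [sum_range_succ, sum_range_succ (fun m : ℕ => cos (m * y)), ← add_assoc,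
        ← sum_add_distrib]
      push_cast
      congr 1
      · exact sum_congr rfl fun m _ => by ring
      · ring
    have hdiff := sin_sq_sub_sin_sq ((n + 1 : ℕ) * y / 2) (n * y / 2)
    have hdir := sin_half_mul_dirichlet n y
    rw [hsplit]
    push_cast at hdiff ⊢
    rw [show (n + 1 : ℝ) * y / 2 + n * y / 2 = (2 * n + 1) * y / 2 by ring,
      show (n + 1 : ℝ) * y / 2 - n * y / 2 = y / 2 by ring] at hdiff
    linear_combination ih + hdiff - sin (y / 2) * hdir

theorem integral_cos_nat_mul (m : ℕ) :
    ∫ y in (-π)..π, cos (m * y) = if m = 0 then 2 * π else 0 := by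
  rcases eq_or_ne m 0 with rfl | hm
  · simp [two_mul]
  · rw [if_neg hm, integral_comp_mul_left cos (Nat.cast_ne_zero.2 hm), integral_cos]
    simp [sin_nat_mul_pi]

noncomputable def fejerKernel (K : ℕ) (y : ℝ) : ℝ :=
  sin (K * y / 2) ^ 2 / (K * sin (y / 2) ^ 2)

noncomputable def fejerSum (K : ℕ) (y : ℝ) : ℝ :=
  2 * ∑ m ∈ range K, (1 - m / K) * cos (m * y) - 1

theorem fejerKernel_nonneg (K : ℕ) (y : ℝ) : 0 ≤ fejerKernel K y := by
  unfold fejerKernel; positivity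

theorem continuous_fejerSum (K : ℕ) : Continuous (fejerSum K) := by
  unfold fejerSum; fun_prop

theorem fejerSum_eq_div {K : ℕ} (hK : K ≠ 0) (y : ℝ) :
    fejerSum K y = (2 * ∑ m ∈ range K, ((K : ℝ) - m) * cos (m * y) - K) / K := by
  have hK' : (K : ℝ) ≠ 0 := Nat.cast_ne_zero.2 hK
  rw [sub_div, mul_div_assoc, sum_div, div_self hK', fejerSum]
  congr 2
  exact sum_congr rfl fun m _ => by field_simp

theorem fejerKernel_eq_fejerSum {K : ℕ} (hK : K ≠ 0) {y : ℝ} (hy : sin (y / 2) ≠ 0) :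
    fejerKernel K y = fejerSum K y := by
  rw [fejerKernel, sin_sq_nat_mul_half, fejerSum_eq_div hK, mul_comm (K : ℝ),
    mul_div_mul_left _ _ (pow_ne_zero 2 hy)]

theorem fejerKernel_ae_eq_fejerSum {K : ℕ} (hK : K ≠ 0) :
    fejerKernel K =ᵐ[volume.restrict (Ι (-π) π)] fejerSum K := by
  rw [Filter.EventuallyEq, ae_restrict_iff' measurableSet_uIoc]
  filter_upwards [volume.ae_ne 0] with y hy0 hy
  rw [uIoc_of_le (by linarith [pi_pos])] at hy
  refine fejerKernel_eq_fejerSum hK fun hsin => hy0 ?_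
  have := (sin_eq_zero_iff_of_lt_of_lt (by linarith [hy.1, pi_pos])
    (by linarith [hy.2, pi_pos])).1 hsin
  linarith

theorem integral_fejerSum {K : ℕ} (hK : K ≠ 0) : ∫ y in (-π)..π, fejerSum K y = 2 * π := by
  have hint : ∀ m ∈ range K,
      IntervalIntegrable (fun y => (1 - (m : ℝ) / K) * cos (m * y)) volume (-π) π :=
    fun m _ => by apply Continuous.intervalIntegrable; fun_prop
  have hsum : IntervalIntegrable (fun y => 2 * ∑ m ∈ range K, (1 - (m : ℝ) / K) * cos (m * y))
      volume (-π) π := by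
    apply Continuous.intervalIntegrable; fun_prop
  unfold fejerSum
  rw [integral_sub hsum intervalIntegrable_const,
    intervalIntegral.integral_const_mul, integral_finsetSum hint]
  simp only [intervalIntegral.integral_const_mul, integral_cos_nat_mul, mul_ite, mul_zero]
  rw [sum_ite_eq' (range K) 0, if_pos (mem_range.2 (Nat.pos_of_ne_zero hK))]
  simp only [Nat.cast_zero, zero_div, sub_zero, intervalIntegral.integral_const, smul_eq_mul]
  ring

theorem integral_fejerKernel {K : ℕ} (hK : K ≠ 0) :
    ∫ y in (-π)..π, fejerKernel K y = 2 * π := by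
  rw [integral_congr_ae_restrict (fejerKernel_ae_eq_fejerSum hK), integral_fejerSum hK]

theorem intervalIntegrable_fejerKernel_mul {K : ℕ} (hK : K ≠ 0) {g : ℝ → ℝ}
    (hg : Continuous g) :
    IntervalIntegrable (fun y => fejerKernel K y * g y) volume (-π) π :=
  ((continuous_fejerSum K).mul hg).intervalIntegrable _ _ |>.congr_ae
    ((fejerKernel_ae_eq_fejerSum hK).symm.mul Filter.EventuallyEq.rfl)

theorem intervalIntegrable_fejerKernel {K : ℕ} (hK : K ≠ 0) :
    IntervalIntegrable (fejerKernel K) volume (-π) π := by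
  simpa using intervalIntegrable_fejerKernel_mul hK continuous_const (g := 1)

theorem sin_sq_half_le_sin_sq_half {δ y : ℝ} (hδ : 0 ≤ δ) (hδy : δ ≤ |y|)
    (hy : |y| ≤ π) :
    sin (δ / 2) ^ 2 ≤ sin (y / 2) ^ 2 := by
  have habs : sin (y / 2) ^ 2 = sin (|y| / 2) ^ 2 := by
    rcases abs_cases y with ⟨h, _⟩ | ⟨h, _⟩ <;> simp [h, neg_div]
  rw [habs]
  exact pow_le_pow_left₀ (sin_nonneg_of_nonneg_of_le_pi (by linarith) (by linarith))
    (sin_le_sin_of_le_of_le_pi_div_two (by linarith [pi_pos]) (by linarith) (by linarith)) 2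

theorem fejerKernel_le {K : ℕ} (hK : K ≠ 0) {δ y : ℝ} (hδ : sin (δ / 2) ≠ 0)
    (h : sin (δ / 2) ^ 2 ≤ sin (y / 2) ^ 2) :
    fejerKernel K y ≤ 1 / (K * sin (δ / 2) ^ 2) := by
  have hK' : (0 : ℝ) < K := Nat.cast_pos.2 (Nat.pos_of_ne_zero hK)
  exact div_le_div₀ zero_le_one (sin_sq_le_one _) (by positivity)
    (mul_le_mul_of_nonneg_left h hK'.le)

theorem fejerKernel_mul_abs_le {K : ℕ} (hK : K ≠ 0) {u M₀ M₁ δ y : ℝ}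
    (hu₀ : |u| ≤ 2 * M₀) (hu₁ : |u| ≤ M₁ * |y|) (hM₁ : 0 ≤ M₁) (hδ0 : 0 < δ)
    (hy : |y| ≤ π) :
    fejerKernel K y * |u| ≤
      fejerKernel K y * (δ * M₁) + 2 * M₀ / (K * sin (δ / 2) ^ 2) := by
  have hkernel := fejerKernel_nonneg K y
  have hM₀ : 0 ≤ 2 * M₀ := (abs_nonneg u).trans hu₀
  rcases le_or_gt |y| δ with hyδ | hδy
  · have hu : |u| ≤ δ * M₁ :=
      hu₁.trans (by rw [mul_comm]; exact mul_le_mul_of_nonneg_right hyδ hM₁)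
    have hC : 0 ≤ 2 * M₀ / (K * sin (δ / 2) ^ 2) := by positivity
    linarith [mul_le_mul_of_nonneg_left hu hkernel]
  · have hsin : sin (δ / 2) ≠ 0 := (sin_pos_of_pos_of_lt_pi (by linarith) (by linarith)).ne'
    calc fejerKernel K y * |u| ≤ 1 / (K * sin (δ / 2) ^ 2) * (2 * M₀) :=
          mul_le_mul (fejerKernel_le hK hsin (sin_sq_half_le_sin_sq_half hδ0.le hδy.le hy))
            hu₀ (abs_nonneg u) (by positivity)
      _ ≤ fejerKernel K y * (δ * M₁) + 2 * M₀ / (K * sin (δ / 2) ^ 2) := by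
          rw [one_div_mul_eq_div]
          linarith [mul_nonneg hkernel (mul_nonneg hδ0.le hM₁)]

theorem abs_intervalAverage_mul_sub_le {k g : ℝ → ℝ} {a b c ε C : ℝ} (hab : a < b)
    (hk : IntervalIntegrable k volume a b)
    (hkg : IntervalIntegrable (fun y => k y * g y) volume a b)
    (hk_int : ∫ y in a..b, k y = b - a)
    (hbound : ∀ y ∈ Ioc a b, |k y * (g y - c)| ≤ k y * ε + C) :
    |1 / (b - a) * (∫ y in a..b, k y * g y) - c| ≤ ε + C := by
  have hba : 0 < b - a := sub_pos.2 hab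
  have hcentre : 1 / (b - a) * (∫ y in a..b, k y * g y) - c
      = 1 / (b - a) * ∫ y in a..b, k y * (g y - c) := by
    have : ∫ y in a..b, k y * (g y - c) = (∫ y in a..b, k y * g y) - (b - a) * c := by
      simp only [mul_sub]
      rw [integral_sub hkg (hk.mul_const c), intervalIntegral.integral_mul_const, hk_int]
    rw [this]
    field_simp
  have hmajorant : ∫ y in a..b, (k y * ε + C) = (b - a) * (ε + C) := by
    rw [integral_add (hk.mul_const ε) intervalIntegrable_const,
      intervalIntegral.integral_mul_const, hk_int, intervalIntegral.integral_const, smul_eq_mul]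
    ring
  rw [hcentre, abs_mul, abs_of_pos (by positivity), one_div_mul_eq_div,
    div_le_iff₀ hba, mul_comm _ (b - a), ← hmajorant]
  exact norm_integral_le_of_norm_le (f := fun y => k y * (g y - c)) hab.le
    (ae_of_all _ hbound) ((hk.mul_const ε).add intervalIntegrable_const)

theorem stmt_19_general (K : ℕ) (hK : 1 ≤ K)
    (f : ℝ → ℝ) (hf : Differentiable ℝ f)
    (M₀ M₁ : ℝ)
    (hfb : ∀ y : ℝ, |f y| ≤ M₀) (hfd : ∀ y : ℝ, |deriv f y| ≤ M₁)
    (δ : ℝ) (hδ0 : 0 < δ) (x : ℝ) :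
    |(1 / (2 * π)) *
        (∫ y in (-π)..π, (Real.sin (K * y / 2) ^ 2 / (K * Real.sin (y / 2) ^ 2)) * f (x - y))
      - f x| ≤ δ * M₁ + 2 * M₀ / (K * Real.sin (δ / 2) ^ 2) := by
  have hK0 : K ≠ 0 := Nat.one_le_iff_ne_zero.1 hK
  have hM₁ : 0 ≤ M₁ := (abs_nonneg _).trans (hfd 0)
  have hlip (y : ℝ) : |f (x - y) - f x| ≤ M₁ * |y| := by
    simpa using convex_univ.norm_image_sub_le_of_norm_deriv_le (fun z _ => hf z)
      (fun z _ => hfd z) (mem_univ x) (mem_univ (x - y))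
  have hbound (y : ℝ) (hy : y ∈ Ioc (-π) π) :
      |fejerKernel K y * (f (x - y) - f x)| ≤
        fejerKernel K y * (δ * M₁) + 2 * M₀ / (K * sin (δ / 2) ^ 2) := by
    rw [abs_mul, abs_of_nonneg (fejerKernel_nonneg K y)]
    exact fejerKernel_mul_abs_le hK0
      ((abs_sub _ _).trans (by linarith [hfb (x - y), hfb x]))
      (hlip y) hM₁ hδ0 (abs_le.2 ⟨hy.1.le, hy.2⟩)
  have hav := abs_intervalAverage_mul_sub_le (neg_lt_self pi_pos)
    (intervalIntegrable_fejerKernel hK0)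
    (intervalIntegrable_fejerKernel_mul hK0 (hf.continuous.comp (continuous_sub_left x)))
    (by rw [integral_fejerKernel hK0]; ring) hbound
  rwa [show π - -π = 2 * π by ring] at hav

/-- Fejér approximation bound: for a differentiable `f` with `|f| ≤ M₀` and
`|f′| ≤ M₁`, the Fejér-smoothed average `(f ∗ S_K)(x) = (1/(2π))∫_{−π}^{π} S_K(y) f(x − y) dy`
satisfies `|(f ∗ S_K)(x) − f(x)| ≤ δM₁ + 2M₀/(K sin²(δ/2))` for every `δ ∈ (0, π]`. -/
theorem stmt_19 (K : ℕ) (hK : 1 ≤ K)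
    (f : ℝ → ℝ) (hf : Differentiable ℝ f)
    (M₀ M₁ : ℝ) (hM₀ : 0 ≤ M₀) (hM₁ : 0 ≤ M₁)
    (hfb : ∀ y : ℝ, |f y| ≤ M₀) (hfd : ∀ y : ℝ, |deriv f y| ≤ M₁)
    (δ : ℝ) (hδ0 : 0 < δ) (hδπ : δ ≤ π) (x : ℝ) :
    |(1 / (2 * π)) *
        (∫ y in (-π)..π, (Real.sin (K * y / 2) ^ 2 / (K * Real.sin (y / 2) ^ 2)) * f (x - y))
      - f x| ≤ δ * M₁ + 2 * M₀ / (K * Real.sin (δ / 2) ^ 2) :=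
  stmt_19_general K hK f hf M₀ M₁ hfb hfd δ hδ0 x
end
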